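/- arXiv:1702.01075 — 6 statements merged into one kernel-verified Lean document; each statement's English description precedes it below -/
import Mathlib

section
/- The gradient of F(r) = Σ_{i<j} α_{ij} [(x_i-x_j)^4 + (y_i-y_j)^4 + ((z_i-z_j)/c)^4] vanishes at a point r if and only if α_{ij}·(r_i - r_j) = 0 for all pairs i < j. -/
/-!
`F` is a nonnegative polynomial, homogeneous of degree 4. By Euler's identity `DF(r) r = 4 F(r)`,
so a critical point is a zero of `F`; conversely a zero of the nonnegative `F` is a global
minimum, hence critical. Thus `DF(r) = 0 ↔ F(r) = 0`, and since `F` is a sum of nonnegative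
terms `α_{ij} E(r_i - r_j)` with `E(u) = 0 ↔ u = 0`, `F(r) = 0` says exactly
that `α_{ij} (r_i - r_j) = 0` for every pair.
-/

open Finset

section Homogeneous

variable {𝕜 E F : Type*} [NontriviallyNormedField 𝕜] [NormedAddCommGroup E] [NormedSpace 𝕜 E]
  [NormedAddCommGroup F] [NormedSpace 𝕜 F]

theorem fderiv_apply_self_of_homogeneous {f : E → F} {n : ℕ}
    (hf : ∀ (t : 𝕜) x, f (t • x) = t ^ n • f x) {x : E} (hd : DifferentiableAt 𝕜 f x) :
    fderiv 𝕜 f x x = (n : 𝕜) • f x := by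
  have hline : HasDerivAt (fun t : 𝕜 => t • x) x 1 := by
    simpa using (hasDerivAt_id (1 : 𝕜)).smul_const x
  have hcomp : HasDerivAt (fun t : 𝕜 => f (t • x)) (fderiv 𝕜 f x x) 1 := by
    rw [← one_smul 𝕜 x] at hd
    simpa [Function.comp_def] using hd.hasFDerivAt.comp_hasDerivAt (1 : 𝕜) hline
  have hpow : HasDerivAt (fun t : 𝕜 => t ^ n • f x) ((n : 𝕜) • f x) 1 := by
    simpa using (hasDerivAt_pow n (1 : 𝕜)).smul_const (f x)
  simp only [hf] at hcomp
  exact hcomp.unique hpow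

end Homogeneous

theorem fderiv_eq_zero_iff_of_homogeneous_of_nonneg {E : Type*} [NormedAddCommGroup E]
    [NormedSpace ℝ E] {f : E → ℝ} {n : ℕ} (hn : n ≠ 0)
    (hf : ∀ (t : ℝ) x, f (t • x) = t ^ n * f x) (hf₀ : ∀ x, 0 ≤ f x) {x : E}
    (hd : DifferentiableAt ℝ f x) : fderiv ℝ f x = 0 ↔ f x = 0 := by
  constructor
  · intro h
    have := fderiv_apply_self_of_homogeneous hf hd
    rw [h, zero_apply, smul_eq_mul, eq_comm] at this
    exact (mul_eq_zero.1 this).resolve_left (by exact_mod_cast hn)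
  · intro h
    have hmin : IsMinOn f Set.univ x := fun y _ => h ▸ hf₀ y
    exact (hmin.isLocalMin Filter.univ_mem).fderiv_eq_zero

noncomputable section Energy

variable (c : ℝ)

def pairEnergy (u : Fin 3 → ℝ) : ℝ := u 0 ^ 4 + u 1 ^ 4 + (u 2 / c) ^ 4

theorem pairEnergy_nonneg (u : Fin 3 → ℝ) : 0 ≤ pairEnergy c u := by
  unfold pairEnergy
  positivity

theorem pairEnergy_eq_zero_iff {c : ℝ} (hc : c ≠ 0) {u : Fin 3 → ℝ} :
    pairEnergy c u = 0 ↔ u = 0 := by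
  refine ⟨fun h => ?_, fun h => by simp [pairEnergy, h]⟩
  unfold pairEnergy at h
  have h₀ : 0 ≤ u 0 ^ 4 := by positivity
  have h₁ : 0 ≤ u 1 ^ 4 := by positivity
  have h₂ : 0 ≤ (u 2 / c) ^ 4 := by positivity
  have e₀ : u 0 = 0 := pow_eq_zero_iff (n := 4) (by norm_num) |>.1 (by linarith)
  have e₁ : u 1 = 0 := pow_eq_zero_iff (n := 4) (by norm_num) |>.1 (by linarith)
  have e₂ : u 2 / c = 0 := pow_eq_zero_iff (n := 4) (by norm_num) |>.1 (by linarith)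
  rw [div_eq_zero_iff, or_iff_left hc] at e₂
  ext k
  fin_cases k <;> assumption

theorem pairEnergy_smul (t : ℝ) (u : Fin 3 → ℝ) :
    pairEnergy c (t • u) = t ^ 4 * pairEnergy c u := by
  simp only [pairEnergy, Pi.smul_apply, smul_eq_mul]
  ring

variable {m : ℕ} (α : Fin m → Fin m → ℝ)

def energy (r : Fin m → Fin 3 → ℝ) : ℝ :=
  ∑ i, ∑ j, if i < j then α i j * pairEnergy c (r i - r j) else 0

theorem energy_smul (t : ℝ) (r : Fin m → Fin 3 → ℝ) :
    energy c α (t • r) = t ^ 4 * energy c α r := by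
  simp only [energy, mul_sum, Pi.smul_apply, ← smul_sub, pairEnergy_smul, mul_ite, mul_zero,
    mul_left_comm]

theorem differentiable_energy : Differentiable ℝ (energy c α) := by
  refine Differentiable.fun_sum fun i _ => Differentiable.fun_sum fun j _ => ?_
  split_ifs
  · unfold pairEnergy
    fun_prop
  · exact differentiable_const 0

variable {α}

theorem energy_summand_nonneg (hα : ∀ i j, 0 ≤ α i j) (r : Fin m → Fin 3 → ℝ) (i j : Fin m) :
    0 ≤ if i < j then α i j * pairEnergy c (r i - r j) else 0 := by
  split_ifs
  exacts [mul_nonneg (hα i j) (pairEnergy_nonneg c _), le_rfl]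

theorem energy_nonneg (hα : ∀ i j, 0 ≤ α i j) (r : Fin m → Fin 3 → ℝ) : 0 ≤ energy c α r :=
  sum_nonneg fun i _ => sum_nonneg fun j _ => energy_summand_nonneg c hα r i j

theorem energy_eq_zero_iff {c : ℝ} (hc : c ≠ 0) (hα : ∀ i j, 0 ≤ α i j)
    (r : Fin m → Fin 3 → ℝ) :
    energy c α r = 0 ↔ ∀ i j : Fin m, i < j → α i j • (r i - r j) = 0 := by
  have hrow (i : Fin m) : 0 ≤ ∑ j, if i < j then α i j * pairEnergy c (r i - r j) else 0 :=
    sum_nonneg fun j _ => energy_summand_nonneg c hα r i j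
  simp only [energy, sum_eq_zero_iff_of_nonneg fun i _ => hrow i,
    sum_eq_zero_iff_of_nonneg fun j _ => energy_summand_nonneg c hα r _ j, mem_univ, true_imp_iff]
  refine forall₂_congr fun i j => ?_
  split_ifs with hij <;>
    simp [hij, smul_eq_zero, pairEnergy_eq_zero_iff hc]

end Energy

theorem stmt1_general (m : ℕ) (c : ℝ) (hc : 0 < c)
    (α : Fin m → Fin m → ℝ) (hα : ∀ i j, 0 ≤ α i j)
    (r : Fin m → Fin 3 → ℝ) :
    fderiv ℝ (fun r : Fin m → Fin 3 → ℝ =>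
        ∑ i : Fin m, ∑ j : Fin m, if i < j then
          α i j * ((r i 0 - r j 0) ^ 4 + (r i 1 - r j 1) ^ 4 + ((r i 2 - r j 2) / c) ^ 4)
        else 0) r = 0
      ↔ ∀ i j : Fin m, i < j → α i j • (r i - r j) = (0 : Fin 3 → ℝ) := by
  change fderiv ℝ (energy c α) r = 0 ↔ _
  rw [fderiv_eq_zero_iff_of_homogeneous_of_nonneg four_ne_zero (energy_smul c α)
    (energy_nonneg c hα) (differentiable_energy c α r), energy_eq_zero_iff hc.ne' hα]

/-- the gradient of F vanishes at r iff α_{ij}·(r_i - r_j) = 0 for all i < j. -/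
theorem stmt1 (m : ℕ) (hm : 2 ≤ m) (c : ℝ) (hc : 0 < c)
    (α : Fin m → Fin m → ℝ) (hα : ∀ i j, 0 ≤ α i j)
    (r : Fin m → Fin 3 → ℝ) :
    fderiv ℝ (fun r : Fin m → Fin 3 → ℝ =>
        ∑ i : Fin m, ∑ j : Fin m, if i < j then
          α i j * ((r i 0 - r j 0) ^ 4 + (r i 1 - r j 1) ^ 4 + ((r i 2 - r j 2) / c) ^ 4)
        else 0) r = 0
      ↔ ∀ i j : Fin m, i < j → α i j • (r i - r j) = (0 : Fin 3 → ℝ) :=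
  stmt1_general m c hc α hα r
end

section
/- Suppose A_k ∈ ℝ^{1×n} and b_k ∈ ℝ for k = 1,...,N, and suppose that for every convex combination (α_k) in the simplex D = {α : α_k ≥ 0, Σα_k = 1}, the vector Σ_k α_k A_k is nonzero. Then there exists a common v ∈ ℝ^n satisfying A_k v ≤ b_k strictly for all k simultaneously, i.e., min_k (−A_k v + b_k) > 0 for some v; in particular the set {v : A_k v ≤ b_k for all k} is nonempty. -/
open Matrix Filter

/-!
The convex combinations of the rows `A k` form a compact convex set not containing `0`, so a
continuous linear functional `x ↦ x ⬝ᵥ w` separates them from `0` (Gordan's alternative):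
every `A k ⬝ᵥ w` is positive. Moving far enough along `-w` then makes every `A k ⬝ᵥ v` as
negative as we like, in particular smaller than every `b k`.
-/

theorem exists_strongDual_pos_of_forall_mem_stdSimplex_sum_ne_zero {ι E : Type*} [Fintype ι]
    [AddCommGroup E] [Module ℝ E] [TopologicalSpace E] [IsTopologicalAddGroup E]
    [ContinuousSMul ℝ E] [LocallyConvexSpace ℝ E] [T1Space E] (A : ι → E)
    (hA : ∀ α ∈ stdSimplex ℝ ι, ∑ k, α k • A k ≠ 0) :
    ∃ f : StrongDual ℝ E, ∀ k, 0 < f (A k) := by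
  set K := Fintype.linearCombination ℝ A '' stdSimplex ℝ ι
  have hK_convex : Convex ℝ K := (convex_stdSimplex ℝ ι).linear_image _
  have hK_compact : IsCompact K :=
    (isCompact_stdSimplex ℝ ι).image (LinearMap.continuous_on_pi _)
  have hK_zero : Disjoint {0} K := by
    rw [Set.disjoint_singleton_left]
    rintro ⟨α, hα, hα0⟩
    exact hA α hα hα0
  obtain ⟨f, u, v, hf0, huv, hfK⟩ := geometric_hahn_banach_closed_compact (convex_singleton 0)
    isClosed_singleton hK_convex hK_compact hK_zero
  refine ⟨f, fun k => ?_⟩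
  classical
  have hAk : A k ∈ K := ⟨Pi.single k 1, single_mem_stdSimplex ℝ k, by simp⟩
  linarith [hf0 0 rfl, map_zero f, hfK _ hAk]

theorem exists_forall_lt_mul_of_pos {ι : Type*} [Finite ι] (c d : ι → ℝ)
    (hd : ∀ k, 0 < d k) : ∃ t : ℝ, ∀ k, c k < t * d k :=
  (eventually_all.2 fun k =>
    (tendsto_id.atTop_mul_const (hd k)).eventually_gt_atTop (c k)).exists

theorem exists_forall_dotProduct_pos {ι m : Type*} [Fintype ι] [Fintype m] (A : ι → m → ℝ)
    (hA : ∀ α ∈ stdSimplex ℝ ι, ∑ k, α k • A k ≠ 0) : ∃ w : m → ℝ, ∀ k, 0 < A k ⬝ᵥ w := by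
  classical
  obtain ⟨f, hf⟩ := exists_strongDual_pos_of_forall_mem_stdSimplex_sum_ne_zero A hA
  obtain ⟨w, hw⟩ := (dotProductEquiv ℝ m).surjective f.toLinearMap
  refine ⟨w, fun k => ?_⟩
  have hfw : w ⬝ᵥ A k = f (A k) := by simpa using LinearMap.congr_fun hw (A k)
  rw [dotProduct_comm, hfw]
  exact hf k

theorem exists_forall_dotProduct_lt {ι m : Type*} [Fintype ι] [Fintype m] (A : ι → m → ℝ)
    (b : ι → ℝ) (hA : ∀ α ∈ stdSimplex ℝ ι, ∑ k, α k • A k ≠ 0) :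
    ∃ v : m → ℝ, ∀ k, A k ⬝ᵥ v < b k := by
  obtain ⟨w, hw⟩ := exists_forall_dotProduct_pos A hA
  obtain ⟨t, ht⟩ := exists_forall_lt_mul_of_pos (fun k => -b k) (fun k => A k ⬝ᵥ w) hw
  refine ⟨-t • w, fun k => ?_⟩
  rw [dotProduct_smul, smul_eq_mul]
  linarith [ht k]

/-- if no convex combination of the rows A_k vanishes, then some v satisfies
all constraints strictly: min_k (−A_k v + b_k) > 0; in particular the constraint set is nonempty. -/
theorem stmt4 (n N : ℕ) (A : Fin N → Fin n → ℝ) (b : Fin N → ℝ)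
    (hA : ∀ α : Fin N → ℝ, (∀ k, 0 ≤ α k) → ∑ k, α k = 1 → ∑ k, α k • A k ≠ 0) :
    (∃ v : Fin n → ℝ, ∀ k, 0 < -(A k ⬝ᵥ v) + b k) ∧
      {v : Fin n → ℝ | ∀ k, A k ⬝ᵥ v ≤ b k}.Nonempty := by
  obtain ⟨v, hv⟩ := exists_forall_dotProduct_lt A b fun α hα => hA α hα.1 hα.2
  exact ⟨⟨v, fun k => by linarith [hv k]⟩, v, fun k => (hv k).le⟩
end

section
/- Given a team of m quadrotors with pairwise distinct positions r_i ∈ ℝ³, the set K_safe = {v ∈ ℝ^{3m} : A_{ij}(q_i,q_j)·v ≤ b_{ij}(q_i,q_j) for all i < j} is nonempty, where A_{ij} = −(e_i − e_j)^T ⊗ [4(x_i−x_j)³, 4(y_i−y_j)³, 4(z_i−z_j)³/c⁴]. -/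
/-!
The gradient of the super-ellipsoidal function `h(d) = dx⁴ + dy⁴ + dz⁴ / c⁴` satisfies Euler's
identity `∇h(d) · d = 4 h(d)`, and each row `A_ij` is `-∇h(r_i - r_j)` paired with `v_i - v_j`.
Hence on the ray `v = t r` every constraint reads `-4 t h(r_i - r_j) ≤ b_ij`, and since
`h(r_i - r_j) > 0` for distinct positions, a large enough `t` satisfies the finitely many
constraints simultaneously.
-/

open Finset

theorem Finset.exists_forall_le_mul_of_pos {ι : Type*} (s : Finset ι) (g b : ι → ℝ)
    (hg : ∀ k ∈ s, 0 < g k) : ∃ t : ℝ, ∀ k ∈ s, b k ≤ t * g k := by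
  obtain ⟨t, ht⟩ := (s.finite_toSet.image fun k => b k / g k).bddAbove
  refine ⟨t, fun k hk => ?_⟩
  have hbound : b k / g k ≤ t := ht ⟨k, hk, rfl⟩
  rwa [div_le_iff₀ (hg k hk)] at hbound

noncomputable def superEllipsoid (c : ℝ) (d : Fin 3 → ℝ) : ℝ :=
  d 0 ^ 4 + d 1 ^ 4 + d 2 ^ 4 / c ^ 4

theorem superEllipsoid_pos {c : ℝ} (hc : c ≠ 0) {d : Fin 3 → ℝ} (hd : d ≠ 0) :
    0 < superEllipsoid c d := by
  obtain ⟨k, hk⟩ := Function.ne_iff.mp hd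
  have hx : 0 ≤ d 0 ^ 4 := by positivity
  have hy : 0 ≤ d 1 ^ 4 := by positivity
  have hz : 0 ≤ d 2 ^ 4 / c ^ 4 := by positivity
  unfold superEllipsoid
  fin_cases k <;> simp only [Fin.zero_eta, Fin.mk_one, Fin.reduceFinMk, Pi.zero_apply] at hk
  · have : 0 < d 0 ^ 4 := by positivity
    linarith
  · have : 0 < d 1 ^ 4 := by positivity
    linarith
  · have : 0 < d 2 ^ 4 / c ^ 4 := by positivity
    linarith

theorem superEllipsoid_euler (c t : ℝ) (p q : Fin 3 → ℝ) :
    4 * (p 0 - q 0) ^ 3 * (t * p 0 - t * q 0) + 4 * (p 1 - q 1) ^ 3 * (t * p 1 - t * q 1)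
      + 4 * (p 2 - q 2) ^ 3 / c ^ 4 * (t * p 2 - t * q 2)
      = 4 * t * superEllipsoid c (p - q) := by
  simp only [superEllipsoid, Pi.sub_apply]
  ring

theorem stmt5_general (m : ℕ) (c : ℝ) (hc : 0 < c)
    (r : Fin m → Fin 3 → ℝ) (hdist : ∀ i j : Fin m, i ≠ j → r i ≠ r j)
    (b : Fin m → Fin m → ℝ) :
    ∃ v : Fin m → Fin 3 → ℝ, ∀ i j : Fin m, i < j →
      -((4 * (r i 0 - r j 0) ^ 3) * (v i 0 - v j 0)
        + (4 * (r i 1 - r j 1) ^ 3) * (v i 1 - v j 1)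
        + (4 * (r i 2 - r j 2) ^ 3 / c ^ 4) * (v i 2 - v j 2)) ≤ b i j := by
  obtain ⟨t, ht⟩ := Finset.exists_forall_le_mul_of_pos ({p | p.1 < p.2} : Finset (Fin m × Fin m))
    (fun p => 4 * superEllipsoid c (r p.1 - r p.2)) (fun p => -b p.1 p.2)
    (fun p hp => by
      have hd : r p.1 - r p.2 ≠ 0 := sub_ne_zero.mpr (hdist _ _ (mem_filter.mp hp).2.ne)
      have := superEllipsoid_pos hc.ne' hd
      positivity)
  refine ⟨t • r, fun i j hij => ?_⟩
  have hbound := ht (i, j) (by simpa using hij)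
  simp only [Pi.smul_apply, smul_eq_mul, superEllipsoid_euler]
  linarith

/-- Theorem 2 of the paper: for pairwise distinct quadrotor positions,
the set K_safe of controls satisfying all pairwise barrier constraints
A_{ij}·v ≤ b_{ij}, with A_{ij} = −(e_i−e_j)ᵀ ⊗ [4Δx³, 4Δy³, 4Δz³/c⁴], is nonempty. -/
theorem stmt5 (m : ℕ) (hm : 2 ≤ m) (c : ℝ) (hc : 0 < c)
    (r : Fin m → Fin 3 → ℝ) (hdist : ∀ i j : Fin m, i ≠ j → r i ≠ r j)
    (b : Fin m → Fin m → ℝ) :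
    ∃ v : Fin m → Fin 3 → ℝ, ∀ i j : Fin m, i < j →
      -((4 * (r i 0 - r j 0) ^ 3) * (v i 0 - v j 0)
        + (4 * (r i 1 - r j 1) ^ 3) * (v i 1 - v j 1)
        + (4 * (r i 2 - r j 2) ^ 3 / c ^ 4) * (v i 2 - v j 2)) ≤ b i j :=
  stmt5_general m c hc r hdist b
end

section
/- Let h : [0,∞) → ℝ be C⁴, let p₁, p₂, p₃, p₄ > 0, and define y_i = (d/dt + p₁)∘(d/dt + p₂)∘...∘(d/dt + p_i) h for i = 1,2,3,4, with y₀ = h. If y_i(0) ≥ 0 for i = 0,1,2,3 and y₄(t) ≥ 0 for all t ≥ 0, then h(t) ≥ 0 for all t ≥ 0. -/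
/-!
Each `Lop p` is an integrating-factor derivative, `Lop p f t = e^{-pt} (e^{pt} f t)'`, so
`Lop p f ≥ 0` on `[0, ∞)` together with `f 0 ≥ 0` forces `f ≥ 0` on `[0, ∞)`. For smooth
enough `f` the operators `Lop p` commute, so `y₄` can be rewritten as `Lop p₄ y₃`, `y₃` as
`Lop p₃ y₂` and `y₂` as `Lop p₂ y₁`; peeling off one operator at a time transfers
nonnegativity from `y₄` down to `h`.
-/

/-- The first-order operator (d/dt + p). -/
noncomputable def Lop (p : ℝ) (f : ℝ → ℝ) : ℝ → ℝ := fun t => deriv f t + p * f t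

open Real Set

section

variable {f : ℝ → ℝ}

lemma contDiff_Lop {n : WithTop ℕ∞} (p : ℝ) (hf : ContDiff ℝ (n + 1) f) :
    ContDiff ℝ n (Lop p f) :=
  hf.deriv'.add (contDiff_const.mul (hf.of_le le_self_add))

lemma deriv_Lop (p : ℝ) (hf : ContDiff ℝ 2 f) (t : ℝ) :
    deriv (Lop p f) t = deriv (deriv f) t + p * deriv f t := by
  have hd : Differentiable ℝ f := hf.differentiable (by norm_num)
  have hd' : Differentiable ℝ (deriv f) := (hf.deriv' (n := 1)).differentiable one_ne_zero
  exact (((hd' t).hasDerivAt.add ((hd t).hasDerivAt.const_mul p))).deriv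

lemma Lop_comm (p q : ℝ) (hf : ContDiff ℝ 2 f) : Lop p (Lop q f) = Lop q (Lop p f) := by
  funext t
  simp only [Lop, deriv_Lop _ hf]
  ring

lemma Lop_Lop_Lop_comm (p q r : ℝ) (hf : ContDiff ℝ 3 f) :
    Lop p (Lop q (Lop r f)) = Lop r (Lop p (Lop q f)) := by
  rw [Lop_comm q r (hf.of_le (by norm_num)), Lop_comm p r (contDiff_Lop (n := 2) q hf)]

lemma Lop_Lop_Lop_Lop_comm (p q r s : ℝ) (hf : ContDiff ℝ 4 f) :
    Lop p (Lop q (Lop r (Lop s f))) = Lop s (Lop p (Lop q (Lop r f))) := by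
  rw [Lop_Lop_Lop_comm q r s (hf.of_le (by norm_num)),
    Lop_comm p s (contDiff_Lop (n := 2) q (contDiff_Lop (n := 3) r hf))]

lemma hasDerivAt_exp_mul_Lop (p : ℝ) {t : ℝ} (hf : DifferentiableAt ℝ f t) :
    HasDerivAt (fun s => exp (p * s) * f s) (exp (p * t) * Lop p f t) t := by
  have hexp : HasDerivAt (fun s => exp (p * s)) (exp (p * t) * p) t := by
    simpa using ((hasDerivAt_id t).const_mul p).exp
  refine (hexp.fun_mul hf.hasDerivAt).congr_deriv ?_
  unfold Lop
  ring

lemma nonneg_of_Lop_nonneg (p : ℝ) {a : ℝ} (hf : Differentiable ℝ f) (ha : 0 ≤ f a)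
    (hL : ∀ t, a ≤ t → 0 ≤ Lop p f t) : ∀ t, a ≤ t → 0 ≤ f t := by
  have hmono : MonotoneOn (fun s => exp (p * s) * f s) (Ici a) :=
    monotoneOn_of_hasDerivWithinAt_nonneg (convex_Ici a)
      (fun s _ => (hasDerivAt_exp_mul_Lop p (hf s)).continuousAt.continuousWithinAt)
      (fun s _ => (hasDerivAt_exp_mul_Lop p (hf s)).hasDerivWithinAt)
      (fun s hs => mul_nonneg (exp_pos _).le (hL s (interior_subset hs)))
  intro t ht
  have hat : exp (p * a) * f a ≤ exp (p * t) * f t := hmono self_mem_Ici ht ht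
  exact nonneg_of_mul_nonneg_right ((mul_nonneg (exp_pos _).le ha).trans hat) (exp_pos _)

end

theorem stmt11_general (h : ℝ → ℝ) (hh : ContDiff ℝ 4 h)
    (p₁ p₂ p₃ p₄ : ℝ)
    (h0 : 0 ≤ h 0)
    (h1 : 0 ≤ Lop p₁ h 0)
    (h2 : 0 ≤ Lop p₁ (Lop p₂ h) 0)
    (h3 : 0 ≤ Lop p₁ (Lop p₂ (Lop p₃ h)) 0)
    (h4 : ∀ t, 0 ≤ t → 0 ≤ Lop p₁ (Lop p₂ (Lop p₃ (Lop p₄ h))) t) :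
    ∀ t, 0 ≤ t → 0 ≤ h t := by
  have hy₁ : ContDiff ℝ 3 (Lop p₁ h) := contDiff_Lop p₁ hh
  have hy₂ : ContDiff ℝ 2 (Lop p₁ (Lop p₂ h)) := contDiff_Lop p₁ (contDiff_Lop p₂ hh)
  have hy₃ : ContDiff ℝ 1 (Lop p₁ (Lop p₂ (Lop p₃ h))) :=
    contDiff_Lop p₁ (contDiff_Lop p₂ (contDiff_Lop p₃ hh))
  have y₃_nonneg := nonneg_of_Lop_nonneg p₄ (hy₃.differentiable one_ne_zero) h3
    (by rwa [← Lop_Lop_Lop_Lop_comm _ _ _ _ hh])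
  have y₂_nonneg := nonneg_of_Lop_nonneg p₃ (hy₂.differentiable (by norm_num)) h2
    (by rwa [← Lop_Lop_Lop_comm _ _ _ (hh.of_le (by norm_num))])
  have y₁_nonneg := nonneg_of_Lop_nonneg p₂ (hy₁.differentiable (by norm_num)) h1
    (by rwa [← Lop_comm _ _ (hh.of_le (by norm_num))])
  exact nonneg_of_Lop_nonneg p₁ (hh.differentiable (by norm_num)) h0 y₁_nonneg

/-- ECBF forward invariance, relative degree 4: with
y_i = (d/dt+p₁)∘…∘(d/dt+p_i) h, if y_i(0) ≥ 0 for i = 0,1,2,3 and y₄(t) ≥ 0 for all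
t ≥ 0, then h(t) ≥ 0 for all t ≥ 0. -/
theorem stmt11 (h : ℝ → ℝ) (hh : ContDiff ℝ 4 h)
    (p₁ p₂ p₃ p₄ : ℝ) (hp₁ : 0 < p₁) (hp₂ : 0 < p₂) (hp₃ : 0 < p₃) (hp₄ : 0 < p₄)
    (h0 : 0 ≤ h 0)
    (h1 : 0 ≤ Lop p₁ h 0)
    (h2 : 0 ≤ Lop p₁ (Lop p₂ h) 0)
    (h3 : 0 ≤ Lop p₁ (Lop p₂ (Lop p₃ h)) 0)
    (h4 : ∀ t, 0 ≤ t → 0 ≤ Lop p₁ (Lop p₂ (Lop p₃ (Lop p₄ h))) t) :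
    ∀ t, 0 ≤ t → 0 ≤ h t :=
  stmt11_general h hh p₁ p₂ p₃ p₄ h0 h1 h2 h3 h4
end

section
/- Let K ∈ ℝ^{1×4} be chosen so that F − GK is Hurwitz (all eigenvalues have negative real part), where F is the 4×4 shift matrix and G = e₄. If η : [0,∞) → ℝ⁴ satisfies η̇ = (F − GK)η + G·w(t) with w(t) ≥ 0 for all t, and η(0) has all components obtained from poles placed at distinct negative reals, then the first component η₁(t) satisfies η₁(t) ≥ (C e^{(F−GK)t} η(0))₁ where C = (1,0,0,0). -/
/-!
The difference `d = η - e^{tA} η(0)` solves `d' = A d + w G` with `d 0 = 0`. As `A = F - G K` is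
a companion matrix, its first coordinate solves the scalar equation `χ_A(D) d₀ = w`, and
`χ_A = ∏ (X + pᵢ)` splits into real first-order factors. Each factor `D + pᵢ` has the positive
impulse response `e^{-pᵢ t}`, so the sign of `w` propagates through the four factors to `d₀`.
-/

open Polynomial

/-- The 4×4 nilpotent shift matrix (ones on the superdiagonal). -/
def Fshift : Matrix (Fin 4) (Fin 4) ℝ := fun i j => if (i : ℕ) + 1 = (j : ℕ) then 1 else 0

/-- G = e₄ = (0,0,0,1)ᵀ. -/
def Gvec : Fin 4 → ℝ := ![0, 0, 0, 1]

section

open Matrix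

lemma nonneg_of_hasDerivAt_neg_mul_add {a : ℝ} {f g : ℝ → ℝ}
    (hf : ∀ s, HasDerivAt f (-(a * f s) + g s) s) (h0 : 0 ≤ f 0) (hg : ∀ s, 0 ≤ s → 0 ≤ g s) :
    ∀ t, 0 ≤ t → 0 ≤ f t := by
  -- integrating factor: `(e^{a s} f s)' = e^{a s} g s ≥ 0`
  have hF : ∀ s, HasDerivAt (fun u => Real.exp (a * u) * f u) (Real.exp (a * s) * g s) s := by
    intro s
    have hexp : HasDerivAt (fun u => Real.exp (a * u)) (Real.exp (a * s) * a) s := by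
      simpa using ((hasDerivAt_id s).const_mul a).exp
    exact (hexp.mul (hf s)).congr_deriv (by ring)
  have hmono : MonotoneOn (fun u => Real.exp (a * u) * f u) (Set.Ici 0) :=
    monotoneOn_of_hasDerivWithinAt_nonneg (convex_Ici 0)
      (fun s _ => (hF s).continuousAt.continuousWithinAt)
      (fun s _ => (hF s).hasDerivWithinAt)
      (fun s hs => mul_nonneg (Real.exp_pos _).le (hg s (interior_subset hs)))
  intro t ht
  have h := hmono Set.self_mem_Ici ht ht
  simp only [mul_zero, Real.exp_zero, one_mul] at h
  exact nonneg_of_mul_nonneg_right (h0.trans h) (Real.exp_pos _)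

lemma hasDerivAt_exp_smul_mulVec {n : Type*} [Fintype n] [DecidableEq n]
    (A : Matrix n n ℝ) (v : n → ℝ) (t : ℝ) :
    HasDerivAt (fun u : ℝ => NormedSpace.exp (u • A) *ᵥ v)
      (A *ᵥ (NormedSpace.exp (t • A) *ᵥ v)) t := by
  let := Matrix.linftyOpNormedRing (n := n) (α := ℝ)
  let := Matrix.linftyOpNormedAlgebra (n := n) (R := ℝ) (α := ℝ)
  let mulVecCLM : Matrix n n ℝ →L[ℝ] n → ℝ :=
    LinearMap.toContinuousLinearMap ((mulVecBilin ℝ ℝ).flip v)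
  have h := mulVecCLM.hasFDerivAt.comp_hasDerivAt t (hasDerivAt_exp_smul_const' (𝕂 := ℝ) A t)
  exact h.congr_deriv (mulVec_mulVec v A _).symm

lemma Fshift_sub_vecMulVec_mulVec (K x : Fin 4 → ℝ) :
    (Fshift - vecMulVec Gvec K) *ᵥ x
      = ![x 1, x 2, x 3, -(K 0 * x 0 + K 1 * x 1 + K 2 * x 2 + K 3 * x 3)] := by
  ext i
  fin_cases i <;>
    simp only [mulVec, dotProduct, Fin.sum_univ_four, Matrix.sub_apply, vecMulVec_apply] <;>
    simp [Fshift, Gvec]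
  ring

lemma charpoly_Fshift_sub_vecMulVec (K : Fin 4 → ℝ) :
    (Fshift - vecMulVec Gvec K).charpoly
      = X ^ 4 + C (K 3) * X ^ 3 + C (K 2) * X ^ 2 + C (K 1) * X + C (K 0) := by
  have hcharmatrix : (Fshift - vecMulVec Gvec K).charmatrix =
      !![X, -1, 0, 0; 0, X, -1, 0; 0, 0, X, -1; C (K 0), C (K 1), C (K 2), X + C (K 3)] := by
    ext i j : 2
    simp only [charmatrix_apply, Matrix.sub_apply, vecMulVec_apply]
    fin_cases i <;> fin_cases j <;> simp [Fshift, Gvec, Fin.ext_iff]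
  rw [charpoly, hcharmatrix]
  simp [det_succ_row_zero, Fin.sum_univ_succ, Fin.succAbove]
  ring

lemma prod_fin_four_X_add_C (p : Fin 4 → ℝ) :
    ∏ i, (X + C (p i)) = X ^ 4 + C (p 0 + p 1 + p 2 + p 3) * X ^ 3
      + C (p 0 * p 1 + p 0 * p 2 + p 0 * p 3 + p 1 * p 2 + p 1 * p 3 + p 2 * p 3) * X ^ 2
      + C (p 0 * p 1 * p 2 + p 0 * p 1 * p 3 + p 0 * p 2 * p 3 + p 1 * p 2 * p 3) * X
      + C (p 0 * p 1 * p 2 * p 3) := by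
  simp only [Fin.prod_univ_four, map_add, map_mul]
  ring

lemma eq_of_monic_quartic_eq {a b : Fin 4 → ℝ}
    (h : X ^ 4 + C (a 3) * X ^ 3 + C (a 2) * X ^ 2 + C (a 1) * X + C (a 0)
      = X ^ 4 + C (b 3) * X ^ 3 + C (b 2) * X ^ 2 + C (b 1) * X + C (b 0)) : a = b := by
  ext k
  have hk := congrArg (coeff · k) h
  fin_cases k <;> simpa [coeff_X, coeff_C, coeff_X_pow] using hk

lemma eq_of_charpoly_Fshift_sub_vecMulVec_eq_prod {p K : Fin 4 → ℝ}
    (hK : (Fshift - vecMulVec Gvec K).charpoly = ∏ i, (X + C (p i))) :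
    K = ![p 0 * p 1 * p 2 * p 3,
      p 0 * p 1 * p 2 + p 0 * p 1 * p 3 + p 0 * p 2 * p 3 + p 1 * p 2 * p 3,
      p 0 * p 1 + p 0 * p 2 + p 0 * p 3 + p 1 * p 2 + p 1 * p 3 + p 2 * p 3,
      p 0 + p 1 + p 2 + p 3] := by
  apply eq_of_monic_quartic_eq
  rw [← charpoly_Fshift_sub_vecMulVec, hK, prod_fin_four_X_add_C]
  rfl

lemma hasDerivAt_coord_of_hasDerivAt_Fshift_sub_vecMulVec {K : Fin 4 → ℝ} {x : ℝ → Fin 4 → ℝ}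
    {w : ℝ → ℝ} (hx : ∀ s, HasDerivAt x ((Fshift - vecMulVec Gvec K) *ᵥ x s + w s • Gvec) s) :
    (∀ s, HasDerivAt (fun u => x u 0) (x s 1) s) ∧ (∀ s, HasDerivAt (fun u => x u 1) (x s 2) s) ∧
      (∀ s, HasDerivAt (fun u => x u 2) (x s 3) s) ∧
      ∀ s, HasDerivAt (fun u => x u 3)
        (-(K 0 * x s 0 + K 1 * x s 1 + K 2 * x s 2 + K 3 * x s 3) + w s) s := by
  simp only [Fshift_sub_vecMulVec_mulVec, hasDerivAt_pi] at hx
  exact ⟨fun s => (hx s 0).congr_deriv (by simp [Gvec]),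
    fun s => (hx s 1).congr_deriv (by simp [Gvec]),
    fun s => (hx s 2).congr_deriv (by simp [Gvec]),
    fun s => (hx s 3).congr_deriv (by simp [Gvec])⟩

lemma nonneg_of_hasDerivAt_chain {p : Fin 4 → ℝ} {x : ℝ → Fin 4 → ℝ} {w : ℝ → ℝ}
    (h0 : ∀ s, HasDerivAt (fun u => x u 0) (x s 1) s)
    (h1 : ∀ s, HasDerivAt (fun u => x u 1) (x s 2) s)
    (h2 : ∀ s, HasDerivAt (fun u => x u 2) (x s 3) s)
    (h3 : ∀ s, HasDerivAt (fun u => x u 3)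
      (-(p 0 * p 1 * p 2 * p 3 * x s 0
        + (p 0 * p 1 * p 2 + p 0 * p 1 * p 3 + p 0 * p 2 * p 3 + p 1 * p 2 * p 3) * x s 1
        + (p 0 * p 1 + p 0 * p 2 + p 0 * p 3 + p 1 * p 2 + p 1 * p 3 + p 2 * p 3) * x s 2
        + (p 0 + p 1 + p 2 + p 3) * x s 3) + w s) s)
    (hx : x 0 = 0) (hw : ∀ s, 0 ≤ s → 0 ≤ w s) :
    ∀ t, 0 ≤ t → 0 ≤ x t 0 := by
  -- `(D + p₃)(D + p₂)(D + p₁)(D + p₀) x₀ = w`: peel off one first-order factor at a time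
  set v₁ : ℝ → ℝ := fun s => x s 1 + p 0 * x s 0
  set v₂ : ℝ → ℝ := fun s => x s 2 + (p 0 + p 1) * x s 1 + p 0 * p 1 * x s 0
  set v₃ : ℝ → ℝ := fun s => x s 3 + (p 0 + p 1 + p 2) * x s 2
    + (p 0 * p 1 + p 0 * p 2 + p 1 * p 2) * x s 1 + p 0 * p 1 * p 2 * x s 0
  have hv₃ : ∀ s, HasDerivAt v₃ (-(p 3 * v₃ s) + w s) s := fun s =>
    ((((h3 s).add ((h2 s).const_mul _)).add ((h1 s).const_mul _)).add
      ((h0 s).const_mul _)).congr_deriv (by ring)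
  have hv₂ : ∀ s, HasDerivAt v₂ (-(p 2 * v₂ s) + v₃ s) s := fun s =>
    (((h2 s).add ((h1 s).const_mul _)).add ((h0 s).const_mul _)).congr_deriv (by ring)
  have hv₁ : ∀ s, HasDerivAt v₁ (-(p 1 * v₁ s) + v₂ s) s := fun s =>
    ((h1 s).add ((h0 s).const_mul _)).congr_deriv (by ring)
  have hx₀ : ∀ s, HasDerivAt (fun u => x u 0) (-(p 0 * x s 0) + v₁ s) s := fun s =>
    (h0 s).congr_deriv (by ring)
  have hzero : ∀ i, x 0 i = 0 := by simp [hx]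
  have hv₃_nonneg := nonneg_of_hasDerivAt_neg_mul_add hv₃ (by simp [v₃, hzero]) hw
  have hv₂_nonneg := nonneg_of_hasDerivAt_neg_mul_add hv₂ (by simp [v₂, hzero]) hv₃_nonneg
  have hv₁_nonneg := nonneg_of_hasDerivAt_neg_mul_add hv₁ (by simp [v₁, hzero]) hv₂_nonneg
  exact nonneg_of_hasDerivAt_neg_mul_add hx₀ (by simp [hzero]) hv₁_nonneg

end

theorem stmt18_general (p : Fin 4 → ℝ)
    (K : Fin 4 → ℝ)
    (hK : (Fshift - Matrix.vecMulVec Gvec K).charpoly = ∏ i, (X + C (p i)))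
    (η : ℝ → Fin 4 → ℝ) (w : ℝ → ℝ)
    (hw : ∀ t, 0 ≤ t → 0 ≤ w t)
    (hη : ∀ t, HasDerivAt η
      ((Fshift - Matrix.vecMulVec Gvec K).mulVec (η t) + w t • Gvec) t) :
    ∀ t, 0 ≤ t →
      (NormedSpace.exp (t • (Fshift - Matrix.vecMulVec Gvec K))).mulVec (η 0) 0 ≤ η t 0 := by
  set A := Fshift - Matrix.vecMulVec Gvec K
  set d : ℝ → Fin 4 → ℝ := fun u => η u - (NormedSpace.exp (u • A)).mulVec (η 0) with hd
  have hd_deriv : ∀ s, HasDerivAt d (A.mulVec (d s) + w s • Gvec) s := fun s =>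
    ((hη s).sub (hasDerivAt_exp_smul_mulVec A (η 0) s)).congr_deriv
      (by rw [hd, Matrix.mulVec_sub]; abel)
  have hd_zero : d 0 = 0 := by simp [d]
  obtain ⟨h0, h1, h2, h3⟩ := hasDerivAt_coord_of_hasDerivAt_Fshift_sub_vecMulVec hd_deriv
  rw [eq_of_charpoly_Fshift_sub_vecMulVec_eq_prod hK] at h3
  intro t ht
  simpa [d] using nonneg_of_hasDerivAt_chain h0 h1 h2 h3 hd_zero hw t ht

/-- ECBF comparison system: if K places the poles of F − GK at distinct
negative reals −p_i (so F − GK is Hurwitz) and η̇ = (F−GK)η + G·w with continuous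
nonnegative forcing w, then the first component of η dominates that of the unforced
solution: η₁(t) ≥ (e^{(F−GK)t} η(0))₁ for all t ≥ 0. -/
theorem stmt18 (p : Fin 4 → ℝ) (hp : ∀ i, 0 < p i) (hdist : Function.Injective p)
    (K : Fin 4 → ℝ)
    (hK : (Fshift - Matrix.vecMulVec Gvec K).charpoly = ∏ i, (X + C (p i)))
    (η : ℝ → Fin 4 → ℝ) (w : ℝ → ℝ) (hw_cont : Continuous w)
    (hw : ∀ t, 0 ≤ t → 0 ≤ w t)
    (hη : ∀ t, HasDerivAt η
      ((Fshift - Matrix.vecMulVec Gvec K).mulVec (η t) + w t • Gvec) t) :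
    ∀ t, 0 ≤ t →
      (NormedSpace.exp (t • (Fshift - Matrix.vecMulVec Gvec K))).mulVec (η 0) 0 ≤ η t 0 :=
  stmt18_general p K hK η w hw hη
end

section
/- For real negative poles −p₁, −p₂, −p₃, −p₄ with p_i > 0, and F − GK the companion-form matrix with characteristic polynomial Π(s + p_i), the function t ↦ (e^{(F−GK)t} G)₁ = first component of e^{(F−GK)t}e₄ is nonnegative for all t ≥ 0. -/
/-!
Let `P_k = ∏_{i<k} (X - a_i)` and `u_k(t) = ℓ(e^{tA} P_k(A))`. Then `u_k' = a_k u_k + u_{k+1}`,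
and `u_{n+1} = 0` by Cayley–Hamilton when the `a_i` are the eigenvalues of `A`. If moreover
`ℓ(A^j) = 0` for `j < n` and `ℓ(A^n) ≥ 0` (relative degree `n + 1`), then `u_k(0)` is `0` for
`k < n` and `ℓ(A^n)` for `k = n`. A real function with `f(0) ≥ 0` and `f' ≥ c f` stays
nonnegative (multiply by `e^{-ct}`), so nonnegativity descends the cascade from `u_{n+1}` to
`u_0(t) = ℓ(e^{tA})`. For the companion matrix `F - G K` and `ℓ(M) = (M G)₁`, the first
components of `G, AG, A²G, A³G` are `0, 0, 0, 1`.
-/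

open Polynomial

open Finset NormedSpace
open scoped Matrix

theorem nonneg_of_hasDerivAt_of_mul_le {f f' : ℝ → ℝ} {c : ℝ} (hf : ∀ t, HasDerivAt f (f' t) t)
    (hf0 : 0 ≤ f 0) (hle : ∀ t, 0 ≤ t → c * f t ≤ f' t) {t : ℝ} (ht : 0 ≤ t) : 0 ≤ f t := by
  set φ : ℝ → ℝ := fun s => Real.exp (-c * s) * f s
  have hφ : ∀ s, HasDerivAt φ (Real.exp (-c * s) * (f' s - c * f s)) s := fun s => by
    have h := ((hasDerivAt_id s).const_mul (-c)).exp.mul (hf s)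
    simp only [id, mul_one] at h
    exact h.congr_deriv (by ring)
  have hmono : MonotoneOn φ (Set.Ici 0) := by
    refine monotoneOn_of_deriv_nonneg (convex_Ici 0)
      (fun s _ => (hφ s).continuousAt.continuousWithinAt)
      (fun s _ => (hφ s).differentiableAt.differentiableWithinAt) fun s hs => ?_
    rw [interior_Ici] at hs
    rw [(hφ s).deriv]
    exact mul_nonneg (Real.exp_pos _).le (sub_nonneg.2 (hle s (le_of_lt hs)))
  have hφt : 0 ≤ φ t := by
    have h := hmono Set.self_mem_Ici (Set.mem_Ici.2 ht) ht
    simp only [φ, mul_zero, Real.exp_zero, one_mul] at h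
    exact hf0.trans h
  exact nonneg_of_mul_nonneg_right hφt (Real.exp_pos _)

theorem Polynomial.Monic.coeff_nonneg_of_natDegree_le {R : Type*} [Semiring R] [PartialOrder R]
    [ZeroLEOneClass R] {q : R[X]} (hq : q.Monic) {n : ℕ} (hn : q.natDegree ≤ n) :
    0 ≤ q.coeff n := by
  rcases hn.lt_or_eq with hlt | rfl
  · rw [coeff_eq_zero_of_natDegree_lt hlt]
  · rw [hq.coeff_natDegree]
    exact zero_le_one

theorem apply_aeval_eq_coeff_smul {R 𝔸 M : Type*} [CommSemiring R] [Semiring 𝔸] [Algebra R 𝔸]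
    [AddCommMonoid M] [Module R M] (A : 𝔸) (ℓ : 𝔸 →ₗ[R] M) {n : ℕ}
    (hℓ : ∀ j < n, ℓ (A ^ j) = 0) {q : R[X]} (hq : q.natDegree ≤ n) :
    ℓ (aeval A q) = q.coeff n • ℓ (A ^ n) := by
  rw [aeval_eq_sum_range' (Nat.lt_succ_of_le hq), map_sum, sum_range_succ,
    sum_eq_zero fun j hj => by rw [map_smul, hℓ j (mem_range.1 hj), smul_zero], zero_add, map_smul]

section BanachAlgebra

variable {𝔸 : Type*} [NormedRing 𝔸] [NormedAlgebra ℝ 𝔸] [CompleteSpace 𝔸] (A : 𝔸) (ℓ : 𝔸 →L[ℝ] ℝ)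

theorem hasDerivAt_apply_exp_smul_mul_aeval (q : ℝ[X]) (t : ℝ) :
    HasDerivAt (fun s : ℝ => ℓ (exp (s • A) * aeval A q))
      (ℓ (exp (t • A) * aeval A (X * q))) t := by
  have h := ℓ.hasFDerivAt.comp_hasDerivAt t ((hasDerivAt_exp_smul_const A t).mul_const (aeval A q))
  rw [map_mul (aeval A) X q, aeval_X, ← mul_assoc]
  exact h

theorem apply_exp_smul_mul_aeval_nonneg_of_mul_X_sub_C (q : ℝ[X]) (c : ℝ)
    (hq : 0 ≤ ℓ (aeval A q))
    (hqc : ∀ t : ℝ, 0 ≤ t → 0 ≤ ℓ (exp (t • A) * aeval A ((X - C c) * q))) {t : ℝ} (ht : 0 ≤ t) :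
    0 ≤ ℓ (exp (t • A) * aeval A q) := by
  refine nonneg_of_hasDerivAt_of_mul_le (c := c)
    (hasDerivAt_apply_exp_smul_mul_aeval A ℓ q) ?_ ?_ ht
  · simpa using hq
  · intro s hs
    have h := hqc s hs
    simp only [sub_mul, map_sub, mul_sub, C_mul', map_smul, mul_smul_comm, smul_eq_mul] at h
    linarith

theorem apply_exp_smul_nonneg_of_aeval_prod_eq_zero (a : ℕ → ℝ) (n : ℕ)
    (hA : aeval A (∏ i ∈ range (n + 1), (X - C (a i))) = 0)
    (hℓ : ∀ j < n, ℓ (A ^ j) = 0) (hℓn : 0 ≤ ℓ (A ^ n)) {t : ℝ} (ht : 0 ≤ t) :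
    0 ≤ ℓ (exp (t • A)) := by
  have hinit : ∀ k ≤ n, 0 ≤ ℓ (aeval A (∏ i ∈ range k, (X - C (a i)))) := fun k hk => by
    rw [← ContinuousLinearMap.coe_coe, apply_aeval_eq_coeff_smul A (ℓ : 𝔸 →ₗ[ℝ] ℝ) hℓ (by simpa)]
    exact smul_nonneg ((monic_prod_X_sub_C a _).coeff_nonneg_of_natDegree_le (by simpa)) hℓn
  have hchain : ∀ k ≤ n + 1, ∀ s : ℝ, 0 ≤ s →
      0 ≤ ℓ (exp (s • A) * aeval A (∏ i ∈ range k, (X - C (a i)))) := fun k hk =>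
    Nat.decreasingInduction (motive := fun k _ => ∀ s : ℝ, 0 ≤ s →
        0 ≤ ℓ (exp (s • A) * aeval A (∏ i ∈ range k, (X - C (a i)))))
      (fun k hk ih s hs => apply_exp_smul_mul_aeval_nonneg_of_mul_X_sub_C A ℓ _ (a k)
        (hinit k (Nat.lt_succ_iff.1 hk)) (by simpa [prod_range_succ, mul_comm] using ih) hs)
      (by simp [hA]) hk
  simpa using hchain 0 (Nat.zero_le _) t ht

end BanachAlgebra

theorem Matrix.exp_smul_mulVec_apply_nonneg {ι : Type*} [Fintype ι] [DecidableEq ι]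
    (A : Matrix ι ι ℝ) (b : ι → ℝ) (i : ι) (a : ℕ → ℝ) (n : ℕ)
    (hA : A.charpoly = ∏ k ∈ range (n + 1), (X - C (a k)))
    (hb : ∀ j < n, (A ^ j *ᵥ b) i = 0) (hbn : 0 ≤ (A ^ n *ᵥ b) i) {t : ℝ} (ht : 0 ≤ t) :
    0 ≤ (exp (t • A) *ᵥ b) i := by
  let : NormedRing (Matrix ι ι ℝ) := Matrix.linftyOpNormedRing
  let : NormedAlgebra ℝ (Matrix ι ι ℝ) := Matrix.linftyOpNormedAlgebra
  let ℓ : Matrix ι ι ℝ →L[ℝ] ℝ :=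
    LinearMap.toContinuousLinearMap
      (LinearMap.proj i ∘ₗ LinearMap.applyₗ b ∘ₗ Matrix.toLin'.toLinearMap)
  exact apply_exp_smul_nonneg_of_aeval_prod_eq_zero A ℓ a n (hA ▸ A.aeval_self_charpoly) hb hbn ht

theorem closedLoop_mulVec (K v : Fin 4 → ℝ) :
    (Fshift - Matrix.vecMulVec Gvec K) *ᵥ v = ![v 1, v 2, v 3, -(K ⬝ᵥ v)] := by
  rw [Matrix.sub_mulVec, Matrix.vecMulVec_mulVec]
  ext i
  fin_cases i <;> simp [Matrix.mulVec, dotProduct, Fin.sum_univ_four, Fshift, Gvec]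

theorem closedLoop_pow_mulVec_Gvec_apply_zero_of_lt (K : Fin 4 → ℝ) :
    ∀ j < 3, ((Fshift - Matrix.vecMulVec Gvec K) ^ j *ᵥ Gvec) 0 = 0 := by
  intro j hj
  interval_cases j <;>
    simp only [pow_succ', pow_zero, Matrix.one_mulVec, ← Matrix.mulVec_mulVec,
      closedLoop_mulVec] <;>
    simp [Gvec]

theorem closedLoop_pow_three_mulVec_Gvec_apply_zero (K : Fin 4 → ℝ) :
    ((Fshift - Matrix.vecMulVec Gvec K) ^ 3 *ᵥ Gvec) 0 = 1 := by
  simp only [pow_succ', pow_zero, Matrix.one_mulVec, ← Matrix.mulVec_mulVec, closedLoop_mulVec]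
  simp [Gvec]

theorem stmt19_general (p : Fin 4 → ℝ)
    (K : Fin 4 → ℝ)
    (hK : (Fshift - Matrix.vecMulVec Gvec K).charpoly = ∏ i, (X + C (p i))) :
    ∀ t : ℝ, 0 ≤ t →
      0 ≤ (NormedSpace.exp (t • (Fshift - Matrix.vecMulVec Gvec K))).mulVec Gvec 0 := by
  intro t ht
  have hK' : (Fshift - Matrix.vecMulVec Gvec K).charpoly =
      ∏ k ∈ range 4, (X - C (-p (Fin.ofNat 4 k))) := by
    rw [hK, ← Fin.prod_univ_eq_prod_range]
    simp
  exact Matrix.exp_smul_mulVec_apply_nonneg _ Gvec 0 _ 3 hK'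
    (closedLoop_pow_mulVec_Gvec_apply_zero_of_lt K)
    (closedLoop_pow_three_mulVec_Gvec_apply_zero K ▸ zero_le_one) ht

/-- for the companion-form closed loop F − GK with characteristic polynomial
Π_i (s + p_i), p_i > 0 distinct, the impulse response t ↦ (e^{(F−GK)t} G)₁ is
nonnegative for all t ≥ 0. -/
theorem stmt19 (p : Fin 4 → ℝ) (hp : ∀ i, 0 < p i) (hdist : Function.Injective p)
    (K : Fin 4 → ℝ)
    (hK : (Fshift - Matrix.vecMulVec Gvec K).charpoly = ∏ i, (X + C (p i))) :
    ∀ t : ℝ, 0 ≤ t →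
      0 ≤ (NormedSpace.exp (t • (Fshift - Matrix.vecMulVec Gvec K))).mulVec Gvec 0 :=
  stmt19_general p K hK
end
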